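/- arXiv:2201.08937 — 3 statements merged into one kernel-verified Lean document; each statement's English description precedes it below -/
import Mathlib

section
/- Let q, n be integers with q - n ≠ 0 and q - n ≠ 1, let λ₀, λ_N be real constants, and let h : ℝ → ℝ be a positive smooth function satisfying h'' = (1 - λ₀/(q-n))·h and λ_N - (q-n-1)(h')² + (q-n)h h' - (1 + λ₀ - λ₀/(q-n))h² = 0 on all of ℝ. Then either (λ₀ = 0, λ_N = 0, and h(t) = c₁ e^t for some constant c₁ > 0), or (λ₀ = q - n and h is the constant √(λ_N/(q-n))). -/
theorem stmt_7 (q n : ℤ) (lam0 lamN : ℝ) (h : ℝ → ℝ)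
    (hqn0 : q - n ≠ 0) (hqn1 : q - n ≠ 1)
    (hpos : ∀ t : ℝ, 0 < h t)
    (hsmooth : ContDiff ℝ (⊤ : ℕ∞) h)
    (hode : ∀ t : ℝ,
      deriv (deriv h) t = (1 - lam0 / ((q - n : ℤ) : ℝ)) * h t)
    (halg : ∀ t : ℝ,
      lamN - ((q - n - 1 : ℤ) : ℝ) * (deriv h t) ^ 2
        + ((q - n : ℤ) : ℝ) * h t * deriv h t
        - (1 + lam0 - lam0 / ((q - n : ℤ) : ℝ)) * (h t) ^ 2 = 0) :
    (lam0 = 0 ∧ lamN = 0 ∧ ∃ c₁ : ℝ, 0 < c₁ ∧ ∀ t : ℝ, h t = c₁ * Real.exp t)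
    ∨ (lam0 = ((q - n : ℤ) : ℝ) ∧
        ∀ t : ℝ, h t = Real.sqrt (lamN / ((q - n : ℤ) : ℝ))) := by
  set L : ℝ := ((q - n : ℤ) : ℝ) with hL
  have hL0 : L ≠ 0 := Int.cast_ne_zero.mpr hqn0
  set u : ℝ → ℝ := deriv h with hu
  have hdh : ∀ t, HasDerivAt h (u t) t := fun t =>
    (hsmooth.differentiable (by simp) t).hasDerivAt
  have hsmooth' : ContDiff ℝ ((⊤:ℕ∞):WithTop ℕ∞) h := hsmooth.of_le (by simp)
  have hdu0 : Differentiable ℝ u :=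
    (contDiff_infty_iff_deriv.mp hsmooth').2.differentiable (by simp)
  have hdu : ∀ t, HasDerivAt u ((1 - lam0 / L) * h t) t := fun t => by
    have := (hdu0 t).hasDerivAt
    rwa [show deriv u t = (1 - lam0 / L) * h t from hode t] at this
  have ecast : ((q - n - 1 : ℤ) : ℝ) = L - 1 := by rw [hL]; push_cast; ring
  have halg' : ∀ t, lamN - (L - 1) * (u t) ^ 2 + L * h t * u t
      - (1 + lam0 - lam0 / L) * (h t) ^ 2 = 0 := fun t => by
    rw [← ecast]; exact halg t
  -- Step 1: derivative of the algebraic relation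
  have hG : ∀ t, L * (u t - h t) ^ 2 - lam0 * (h t) ^ 2 = 0 := by
    intro t
    have hF : HasDerivAt (fun s => lamN - (L - 1) * (u s) ^ 2 + L * h s * u s
        - (1 + lam0 - lam0 / L) * (h s) ^ 2)
        (0 - (L - 1) * (2 * u t ^ 1 * ((1 - lam0 / L) * h t))
          + (L * u t * u t + L * h t * ((1 - lam0 / L) * h t))
          - (1 + lam0 - lam0 / L) * (2 * h t ^ 1 * u t)) t := by
      exact (((hasDerivAt_const t lamN).sub
          (((hdu t).pow 2).const_mul (L - 1))).add
          (((hdh t).const_mul L).mul (hdu t))).sub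
          (((hdh t).pow 2).const_mul (1 + lam0 - lam0 / L))
    have hzero : HasDerivAt (fun s => lamN - (L - 1) * (u s) ^ 2 + L * h s * u s
        - (1 + lam0 - lam0 / L) * (h s) ^ 2) 0 t := by
      have : (fun s => lamN - (L - 1) * (u s) ^ 2 + L * h s * u s
          - (1 + lam0 - lam0 / L) * (h s) ^ 2) = fun _ => (0:ℝ) := funext halg'
      rw [this]; exact hasDerivAt_const t 0
    have key := hF.unique hzero
    field_simp at key
    have key2 : L ^ 3 * (L * (u t - h t) ^ 2 - lam0 * (h t) ^ 2) = 0 := by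
      linear_combination L ^ 2 * key
    exact (mul_eq_zero.mp key2).resolve_left (pow_ne_zero 3 hL0)
  -- Step 2: derivative of G
  have hK : ∀ t, lam0 * h t * u t = 0 := by
    intro t
    have hF : HasDerivAt (fun s => L * (u s - h s) ^ 2 - lam0 * (h s) ^ 2)
        (L * (2 * (u t - h t) ^ 1 * ((1 - lam0 / L) * h t - u t))
          - lam0 * (2 * h t ^ 1 * u t)) t := by
      exact ((((hdu t).sub (hdh t)).pow 2).const_mul L).sub
        (((hdh t).pow 2).const_mul lam0)
    have hzero : HasDerivAt (fun s => L * (u s - h s) ^ 2 - lam0 * (h s) ^ 2) 0 t := by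
      have : (fun s => L * (u s - h s) ^ 2 - lam0 * (h s) ^ 2) = fun _ => (0:ℝ) :=
        funext hG
      rw [this]; exact hasDerivAt_const t 0
    have key := hF.unique hzero
    have hGt := hG t
    field_simp at key
    nlinarith [key, hGt]
  by_cases hlam : lam0 = 0
  · -- exponential case
    left
    subst hlam
    have huh : ∀ t, u t = h t := by
      intro t
      have hGt := hG t
      have h2 : L * (u t - h t) ^ 2 = 0 := by linarith [hGt]
      have h3 : (u t - h t) ^ 2 = 0 := (mul_eq_zero.mp h2).resolve_left hL0
      have := pow_eq_zero_iff (two_ne_zero) |>.mp h3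
      linarith
    have hconst : ∀ t, h t * Real.exp (-t) = h 0 * Real.exp (-0) := by
      intro t
      have hdg : ∀ s, HasDerivAt (fun r => h r * Real.exp (-r)) 0 s := by
        intro s
        have he : HasDerivAt (fun r : ℝ => Real.exp (-r)) (-Real.exp (-s)) s := by
          have := (Real.hasDerivAt_exp (-s)).comp s ((hasDerivAt_id s).neg)
          simpa [Function.comp_def] using this
        have := (hdh s).mul he
        have e : u s * Real.exp (-s) + h s * -Real.exp (-s) = 0 := by
          rw [huh s]; ring
        rwa [e] at this
      exact is_const_of_deriv_eq_zero
        (fun s => (hdg s).differentiableAt)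
        (fun s => (hdg s).deriv) t 0
    refine ⟨rfl, ?_, h 0, hpos 0, ?_⟩
    · have := halg' 0
      rw [huh 0] at this
      simp at this
      nlinarith [this]
    · intro t
      have := hconst t
      field_simp [Real.exp_neg] at this ⊢
      rw [Real.exp_neg, neg_zero, Real.exp_zero, mul_one] at this
      rw [← this, inv_mul_cancel_right₀ (Real.exp_pos t).ne']
  · -- constant case
    right
    have hu0 : ∀ t, u t = 0 := by
      intro t
      have := hK t
      rcases mul_eq_zero.mp this with h' | h'
      · rcases mul_eq_zero.mp h' with h'' | h''
        · exact absurd h'' hlam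
        · exact absurd h'' (ne_of_gt (hpos t))
      · exact h'
    have hhc : ∀ t, h t = h 0 := fun t =>
      is_const_of_deriv_eq_zero (hsmooth.differentiable (by simp))
        (fun s => hu0 s) t 0
    have hlamL : lam0 = L := by
      have h1 : deriv u 0 = 0 := by
        have : u = fun _ => (0:ℝ) := funext hu0
        rw [this]; simp
      have h2 := hode 0
      rw [show deriv (deriv h) 0 = deriv u 0 from rfl, h1] at h2
      have h3 : (1 - lam0 / L) = 0 := by
        rcases mul_eq_zero.mp h2.symm with h' | h'
        · exact h'
        · exact absurd h' (ne_of_gt (hpos 0))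
      field_simp at h3
      linarith
    refine ⟨hlamL, ?_⟩
    intro t
    have halg0 := halg' 0
    rw [hu0 0, hlamL] at halg0
    have hlamN : lamN = L * (h 0) ^ 2 := by
      field_simp at halg0
      nlinarith [halg0]
    have hdivL : lamN / L = (h 0) ^ 2 := by rw [hlamN]; field_simp
    rw [hhc t, hdivL, Real.sqrt_sq (hpos 0).le]
end

section
/- Let h : ℝ → ℝ be a positive smooth function of the form h(t) = c₁ e^{kt} + c₂ e^{-kt} with k = √(1 + 2/(q-n)) ≠ 0 (q, n integers, q ≠ n), and suppose -h''h - (q-n-1)(h')² + (q-n-2)h h' = c₀ identically for a constant c₀. Then c₁ = c₂ = 0, a contradiction with positivity; hence no such positive h exists when k ≠ 0. -/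
/-!
Writing `u = e^{kt}`, the family `c₁ u + c₂ u⁻¹` is closed under differentiation, so the
quadratic differential expression turns into `A e^{2kt} + B e^{-2kt} + C`. Since `k ≠ 0` it is
constant only if `A = B = 0`, where `A = c₁² ((m-2)k - mk²)` and `B = c₂² (-(m-2)k - mk²)` with
`m = q - n`. Either bracket vanishing gives `((m-2)k)² = (mk²)²`, which together with
`m²k² = m² + 2m` forces `6m = 4`, impossible for an integer. Hence `c₁ = c₂ = 0` and `h = 0`.
-/

open Real

noncomputable def expCombo (a b k t : ℝ) : ℝ := a * exp (k * t) + b * exp (-(k * t))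

theorem hasDerivAt_expCombo (a b k t : ℝ) :
    HasDerivAt (expCombo a b k) (expCombo (k * a) (-(k * b)) k t) t := by
  have hlin : HasDerivAt (fun t => k * t) k t := by simpa using (hasDerivAt_id t).const_mul k
  have hneg : HasDerivAt (fun t => -(k * t)) (-k) t := hlin.neg
  exact ((hlin.exp.const_mul a).add (hneg.exp.const_mul b)).congr_deriv
    (by simp only [expCombo]; ring)

theorem deriv_expCombo (a b k : ℝ) :
    deriv (expCombo a b k) = expCombo (k * a) (-(k * b)) k :=
  funext fun t => (hasDerivAt_expCombo a b k t).deriv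

theorem eq_zero_of_expCombo_eq_const {a b k c : ℝ} (hk : k ≠ 0)
    (hc : ∀ t, expCombo a b k t = c) : a = 0 ∧ b = 0 := by
  have h₀ := hc 0
  have h₁ := hc 1
  have h₂ := hc (-1)
  simp only [expCombo, mul_zero, neg_zero, exp_zero, mul_one, mul_neg, neg_neg] at h₀ h₁ h₂
  set E := exp k
  set E' := exp (-k)
  have hEE' : E * E' = 1 := by rw [← exp_add, add_neg_cancel, exp_zero]
  have hEne : E ≠ E' := fun h => hk (by linarith [exp_injective h])
  have hab : a = b := by
    have : (a - b) * (E - E') = 0 := by linear_combination h₁ - h₂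
    exact sub_eq_zero.mp ((mul_eq_zero.mp this).resolve_right (sub_ne_zero.mpr hEne))
  subst hab
  have hgap : 0 < E + E' - 2 := by
    nlinarith [sq_pos_of_ne_zero (sub_ne_zero.mpr hEne), exp_pos k, exp_pos (-k)]
  have : a * (E + E' - 2) = 0 := by linear_combination h₁ - h₀
  exact ⟨(mul_eq_zero.mp this).resolve_right hgap.ne', (mul_eq_zero.mp this).resolve_right hgap.ne'⟩

noncomputable def odeExpr (m : ℝ) (h : ℝ → ℝ) (t : ℝ) : ℝ :=
  -(deriv (deriv h) t) * h t - (m - 1) * deriv h t ^ 2 + (m - 2) * h t * deriv h t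

theorem odeExpr_expCombo (m a b k t : ℝ) :
    odeExpr m (expCombo a b k) t =
      expCombo (a ^ 2 * ((m - 2) * k - m * k ^ 2)) (b ^ 2 * (-((m - 2) * k) - m * k ^ 2)) (2 * k) t
        + 2 * a * b * k ^ 2 * (m - 2) := by
  have hsq : exp (2 * k * t) = exp (k * t) ^ 2 := by rw [sq, ← exp_add]; ring_nf
  have hsq' : exp (-(2 * k * t)) = exp (-(k * t)) ^ 2 := by rw [sq, ← exp_add]; ring_nf
  have hinv : exp (k * t) * exp (-(k * t)) = 1 := by rw [← exp_add, add_neg_cancel, exp_zero]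
  simp only [odeExpr, deriv_expCombo, expCombo]
  rw [hsq, hsq']
  linear_combination (2 * a * b * k ^ 2 * (m - 2)) * hinv

theorem sub_two_mul_sq_ne_mul_sq_sq {m : ℤ} {k : ℝ} (hk : k ≠ 0)
    (hmk : (m : ℝ) ^ 2 * k ^ 2 = m ^ 2 + 2 * m) : ((m - 2) * k) ^ 2 ≠ (m * k ^ 2) ^ 2 := by
  intro h
  have : k ^ 2 * (6 * m - 4) = 0 := by linear_combination -h - k ^ 2 * hmk
  have : (6 * m - 4 : ℝ) = 0 := (mul_eq_zero.mp this).resolve_left (pow_ne_zero 2 hk)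
  have : 6 * m - 4 = 0 := by exact_mod_cast this
  omega

theorem stmt_8_general (q n : ℤ) (c₁ c₂ c₀ k : ℝ) (h : ℝ → ℝ)
    (hk : k = Real.sqrt (1 + 2 / ((q - n : ℤ) : ℝ))) (hk0 : k ≠ 0)
    (hdef : ∀ t : ℝ, h t = c₁ * Real.exp (k * t) + c₂ * Real.exp (-(k * t)))
    (hpos : ∀ t : ℝ, 0 < h t)
    (hconst : ∀ t : ℝ,
      -(deriv (deriv h) t) * h t - ((q - n - 1 : ℤ) : ℝ) * (deriv h t) ^ 2
        + ((q - n - 2 : ℤ) : ℝ) * h t * deriv h t = c₀) :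
    False := by
  set m : ℤ := q - n
  have hh : h = expCombo c₁ c₂ k := funext hdef
  have hmk : (m : ℝ) ^ 2 * k ^ 2 = m ^ 2 + 2 * m := by
    rw [hk, sq_sqrt (sqrt_ne_zero'.mp (hk ▸ hk0)).le]
    rcases eq_or_ne (m : ℝ) 0 with hm | hm
    · simp [hm]
    · field_simp
  have hode : ∀ t, odeExpr m h t = c₀ := fun t => by
    rw [← hconst t, odeExpr]
    push_cast
    ring
  have hcoeffs := eq_zero_of_expCombo_eq_const (c := c₀ - 2 * c₁ * c₂ * k ^ 2 * (m - 2))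
    (mul_ne_zero two_ne_zero hk0) fun t => by
      rw [eq_sub_iff_add_eq, ← odeExpr_expCombo, ← hh, hode t]
  have hc₁ : c₁ = 0 := by
    refine pow_eq_zero_iff two_ne_zero |>.mp <| (mul_eq_zero.mp hcoeffs.1).resolve_right ?_
    intro h0
    exact sub_two_mul_sq_ne_mul_sq_sq hk0 hmk (by rw [sub_eq_zero.mp h0])
  have hc₂ : c₂ = 0 := by
    refine pow_eq_zero_iff two_ne_zero |>.mp <| (mul_eq_zero.mp hcoeffs.2).resolve_right ?_
    intro h0
    have hneg : ((m : ℝ) - 2) * k = -(m * k ^ 2) := by linarith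
    exact sub_two_mul_sq_ne_mul_sq_sq hk0 hmk (by rw [hneg, neg_sq])
  simpa [hh, expCombo, hc₁, hc₂] using hpos 0

theorem stmt_8 (q n : ℤ) (c₁ c₂ c₀ k : ℝ) (h : ℝ → ℝ)
    (hqn0 : q - n ≠ 0) (hqn2 : q - n ≠ -2)
    (hk : k = Real.sqrt (1 + 2 / ((q - n : ℤ) : ℝ))) (hk0 : k ≠ 0)
    (hdef : ∀ t : ℝ, h t = c₁ * Real.exp (k * t) + c₂ * Real.exp (-(k * t)))
    (hpos : ∀ t : ℝ, 0 < h t)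
    (hconst : ∀ t : ℝ,
      -(deriv (deriv h) t) * h t - ((q - n - 1 : ℤ) : ℝ) * (deriv h t) ^ 2
        + ((q - n - 2 : ℤ) : ℝ) * h t * deriv h t = c₀) :
    False :=
  stmt_8_general q n c₁ c₂ c₀ k h hk hk0 hdef hpos hconst
end

section
/- Let h : ℝ → (0,∞) be twice differentiable with h'' = (1 + 2/m)·h where m is a nonzero integer with 1 + 2/m > 0, and suppose additionally that -h''h - (m-1)(h')² + (m-2)hh' is constant on ℝ. Then no such h exists unless m = -2, in which case h is a positive constant. -/
theorem stmt_19 (m : ℤ) (h : ℝ → ℝ) (hm : m ≠ 0)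
    (hpos : ∀ t : ℝ, 0 < h t)
    (hdiff : ContDiff ℝ (⊤ : ℕ∞) h)
    (hode : ∀ t : ℝ, deriv (deriv h) t = (1 + 2 / ((m : ℝ))) * h t)
    (hconst : ∃ c : ℝ, ∀ t : ℝ,
      -(deriv (deriv h) t) * h t - ((m - 1 : ℤ) : ℝ) * (deriv h t) ^ 2
        + ((m - 2 : ℤ) : ℝ) * h t * deriv h t = c) :
    m = -2 ∧ (∃ C : ℝ, 0 < C ∧ ∀ t : ℝ, h t = C) ∧
    (∀ t : ℝ,
      -(deriv (deriv h) t) * h t - ((m - 1 : ℤ) : ℝ) * (deriv h t) ^ 2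
        + ((m - 2 : ℤ) : ℝ) * h t * deriv h t = 0) := by
  have hm' : (m : ℝ) ≠ 0 := Int.cast_ne_zero.mpr hm
  set κ : ℝ := 1 + 2 / (m : ℝ) with hκdef
  have hκm : κ * m = m + 2 := by rw [hκdef, add_mul, div_mul_cancel₀ _ hm', one_mul]
  have d1 : Differentiable ℝ h := hdiff.differentiable (by simp)
  have d2 : Differentiable ℝ (deriv h) :=
    ((hdiff.of_le (by simp) : ContDiff ℝ ((⊤:ℕ∞):WithTop ℕ∞) h).iterate_deriv 1).differentiable
      (by simp)
  have hh : ∀ t, HasDerivAt h (deriv h t) t := fun t => (d1 t).hasDerivAt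
  have hh2 : ∀ t, HasDerivAt (deriv h) (κ * h t) t := fun t => by
    have := (d2 t).hasDerivAt
    rwa [hode t] at this
  obtain ⟨c, hc⟩ := hconst
  -- First identity Q
  have hQ : ∀ t, ((m:ℝ)-2) * (deriv h t)^2 - 2*((m:ℝ)+2) * (h t * deriv h t)
      + ((m:ℝ)-2)*κ*(h t)^2 = 0 := by
    have hF : (fun t => -(κ * h t * h t) - ((m:ℝ)-1)*(deriv h t)^2
        + ((m:ℝ)-2)*(h t * deriv h t)) = fun _ => c := by
      funext t
      have := hc t
      rw [hode t] at this
      push_cast at this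
      linarith [this]
    intro t
    have hd : HasDerivAt (fun t => -(κ * h t * h t) - ((m:ℝ)-1)*(deriv h t)^2
        + ((m:ℝ)-2)*(h t * deriv h t))
        (-(κ * deriv h t * h t + κ * h t * deriv h t)
          - ((m:ℝ)-1)*((2:ℕ) * deriv h t ^ 1 * (κ * h t))
          + ((m:ℝ)-2)*(deriv h t * deriv h t + h t * (κ * h t))) t := by
      exact ((((hh t).const_mul κ).mul (hh t)).neg.sub
        (((hh2 t).pow 2).const_mul ((m:ℝ)-1))).add
        (((hh t).mul (hh2 t)).const_mul ((m:ℝ)-2))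
    have h0 : -(κ * deriv h t * h t + κ * h t * deriv h t)
          - ((m:ℝ)-1)*((2:ℕ) * deriv h t ^ 1 * (κ * h t))
          + ((m:ℝ)-2)*(deriv h t * deriv h t + h t * (κ * h t)) = 0 := by
      rw [← hd.deriv, hF]
      simp
    push_cast at h0
    linear_combination h0 + 2*(h t * deriv h t) * hκm
  -- Second identity R
  have hR : ∀ t, 4*((m:ℝ)-2)*κ*(h t * deriv h t) - 2*((m:ℝ)+2)*(deriv h t)^2
      - 2*((m:ℝ)+2)*κ*(h t)^2 = 0 := by
    intro t
    have hd : HasDerivAt (fun t => ((m:ℝ)-2) * (deriv h t)^2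
        - 2*((m:ℝ)+2) * (h t * deriv h t) + ((m:ℝ)-2)*κ*(h t)^2)
        (((m:ℝ)-2)*((2:ℕ) * deriv h t ^ 1 * (κ * h t))
          - 2*((m:ℝ)+2)*(deriv h t * deriv h t + h t * (κ * h t))
          + ((m:ℝ)-2)*κ*((2:ℕ) * h t ^ 1 * deriv h t)) t := by
      exact ((((hh2 t).pow 2).const_mul ((m:ℝ)-2)).sub
        (((hh t).mul (hh2 t)).const_mul (2*((m:ℝ)+2)))).add
        (((hh t).pow 2).const_mul (((m:ℝ)-2)*κ))
    have h0 : ((m:ℝ)-2)*((2:ℕ) * deriv h t ^ 1 * (κ * h t))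
          - 2*((m:ℝ)+2)*(deriv h t * deriv h t + h t * (κ * h t))
          + ((m:ℝ)-2)*κ*((2:ℕ) * h t ^ 1 * deriv h t) = 0 := by
      rw [← hd.deriv]
      have : (fun t => ((m:ℝ)-2) * (deriv h t)^2
        - 2*((m:ℝ)+2) * (h t * deriv h t) + ((m:ℝ)-2)*κ*(h t)^2) = fun _ => (0:ℝ) :=
        funext hQ
      rw [this]; simp
    push_cast at h0
    linear_combination h0
  -- key combination
  have key : ∀ t, ((m:ℝ)+2)*(4 - 6*(m:ℝ))*(h t * deriv h t) = 0 := by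
    intro t
    linear_combination ((m:ℝ)*((m:ℝ)+2)/2) * hQ t + ((m:ℝ)*((m:ℝ)-2)/4) * hR t
      - ((m:ℝ)-2)^2*(h t * deriv h t) * hκm
  have hm2 : m = -2 := by
    by_contra hne
    have h1 : ((m:ℝ)+2) ≠ 0 := by
      intro hh0
      apply hne
      have : ((m:ℝ)) = ((-2:ℤ):ℝ) := by push_cast; linarith
      exact_mod_cast this
    have h2 : (4 - 6*(m:ℝ)) ≠ 0 := by
      intro hh0
      have h3 : ((6*m:ℤ):ℝ) = ((4:ℤ):ℝ) := by push_cast; linarith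
      have := Int.cast_injective h3
      omega
    have hder : ∀ t, deriv h t = 0 := by
      intro t
      have := key t
      have hht := (hpos t).ne'
      rcases mul_eq_zero.mp this with h' | h'
      · exact absurd h' (mul_ne_zero h1 h2)
      · rcases mul_eq_zero.mp h' with h'' | h''
        · exact absurd h'' hht
        · exact h''
    have hd0 : deriv h = fun _ => (0:ℝ) := funext hder
    have : deriv (deriv h) 0 = 0 := by rw [hd0]; simp
    rw [hode 0] at this
    have hκ0 : κ = 0 := by
      rcases mul_eq_zero.mp this with h' | h'
      · exact h'
      · exact absurd h' (hpos 0).ne'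
    apply h1
    have := hκm
    rw [hκ0] at this
    linarith
  subst hm2
  have hκ0 : κ = 0 := by rw [hκdef]; norm_num
  have hder : ∀ t, deriv h t = 0 := by
    intro t
    have := hQ t
    rw [hκ0] at this
    push_cast at this
    have h2 : (deriv h t)^2 = 0 := by nlinarith
    exact pow_eq_zero_iff two_ne_zero |>.mp h2
  refine ⟨rfl, ⟨h 0, hpos 0, fun t => is_const_of_deriv_eq_zero d1 hder t 0⟩, ?_⟩
  intro t
  have h2 : deriv (deriv h) t = 0 := by rw [hode t, hκ0, zero_mul]
  rw [h2, hder t]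
  push_cast
  ring
end
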